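/- Let (S, 0) be a pointed metrizable topological space. Then the group Homeo̰₊^{(S,0)}(ℝ, 0) is left-orderable. -/

import Mathlib

open Filter Topology Set

variable (S : Type*) [TopologicalSpace S] (s₀ : S)

/-- Data representing a local homeomorphism `F` of an open neighborhood of
`(0, s₀)` in `ℝ × S` of the form `F (x, s) = (h_s x, s)`, where each `h_s` is a
local orientation-preserving (strictly increasing) homeomorphism of `ℝ`, with
`F (0, s₀) = (0, s₀)`, together with a local inverse `G`. -/
structure ParamLocalHomeo where
  F : ℝ × S → ℝ × S
  G : ℝ × S → ℝ × S
  U : Set (ℝ × S)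
  V : Set (ℝ × S)
  isOpen_U : IsOpen U
  isOpen_V : IsOpen V
  mem_U : ((0 : ℝ), s₀) ∈ U
  mem_V : ((0 : ℝ), s₀) ∈ V
  contF : ContinuousOn F U
  contG : ContinuousOn G V
  mapsF : Set.MapsTo F U V
  mapsG : Set.MapsTo G V U
  leftInv : ∀ p ∈ U, G (F p) = p
  rightInv : ∀ p ∈ V, F (G p) = p
  snd_eq : ∀ p ∈ U, (F p).2 = p.2
  mono : ∀ p ∈ U, ∀ q ∈ U, p.2 = q.2 → p.1 < q.1 → (F p).1 < (F q).1
  fixes : F ((0 : ℝ), s₀) = ((0 : ℝ), s₀)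

namespace ParamLocalHomeo

variable {S s₀}

instance setoid : Setoid (ParamLocalHomeo S s₀) where
  r d e := d.F =ᶠ[nhds ((0 : ℝ), s₀)] e.F
  iseqv := ⟨fun _ => Filter.EventuallyEq.refl _ _,
    fun h => h.symm, fun h h' => h.trans h'⟩

lemma G_fixes (d : ParamLocalHomeo S s₀) : d.G ((0 : ℝ), s₀) = ((0 : ℝ), s₀) := by
  have h := d.leftInv _ d.mem_U
  rw [d.fixes] at h
  exact h

lemma G_snd_eq (d : ParamLocalHomeo S s₀) : ∀ p ∈ d.V, (d.G p).2 = p.2 := by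
  intro p hp
  have h := d.snd_eq (d.G p) (d.mapsG hp)
  rw [d.rightInv p hp] at h
  exact h.symm

def one : ParamLocalHomeo S s₀ where
  F := id
  G := id
  U := Set.univ
  V := Set.univ
  isOpen_U := isOpen_univ
  isOpen_V := isOpen_univ
  mem_U := trivial
  mem_V := trivial
  contF := continuousOn_id
  contG := continuousOn_id
  mapsF := fun _ _ => trivial
  mapsG := fun _ _ => trivial
  leftInv := fun _ _ => rfl
  rightInv := fun _ _ => rfl
  snd_eq := fun _ _ => rfl
  mono := fun _ _ _ _ _ h => h
  fixes := rfl

def comp (d e : ParamLocalHomeo S s₀) : ParamLocalHomeo S s₀ where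
  F := d.F ∘ e.F
  G := e.G ∘ d.G
  U := e.U ∩ e.F ⁻¹' d.U
  V := d.V ∩ d.G ⁻¹' e.V
  isOpen_U := e.contF.isOpen_inter_preimage e.isOpen_U d.isOpen_U
  isOpen_V := d.contG.isOpen_inter_preimage d.isOpen_V e.isOpen_V
  mem_U := ⟨e.mem_U, by simp only [Set.mem_preimage, e.fixes]; exact d.mem_U⟩
  mem_V := ⟨d.mem_V, by simp only [Set.mem_preimage, d.G_fixes]; exact e.mem_V⟩
  contF := d.contF.comp (e.contF.mono Set.inter_subset_left) (fun x hx => hx.2)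
  contG := e.contG.comp (d.contG.mono Set.inter_subset_left) (fun x hx => hx.2)
  mapsF := by
    rintro p ⟨hp1, hp2⟩
    refine ⟨d.mapsF hp2, ?_⟩
    simp only [Set.mem_preimage, Function.comp_apply]
    rw [d.leftInv _ hp2]
    exact e.mapsF hp1
  mapsG := by
    rintro q ⟨hq1, hq2⟩
    refine ⟨e.mapsG hq2, ?_⟩
    simp only [Set.mem_preimage, Function.comp_apply]
    rw [e.rightInv _ hq2]
    exact d.mapsG hq1
  leftInv := by
    rintro p ⟨hp1, hp2⟩
    simp only [Function.comp_apply]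
    rw [d.leftInv _ hp2, e.leftInv _ hp1]
  rightInv := by
    rintro q ⟨hq1, hq2⟩
    simp only [Function.comp_apply]
    rw [e.rightInv _ hq2, d.rightInv _ hq1]
  snd_eq := by
    rintro p ⟨hp1, hp2⟩
    simp only [Function.comp_apply]
    rw [d.snd_eq _ hp2, e.snd_eq _ hp1]
  mono := by
    rintro p ⟨hp1, hp2⟩ q ⟨hq1, hq2⟩ hpq hlt
    refine d.mono _ hp2 _ hq2 ?_ (e.mono _ hp1 _ hq1 hpq hlt)
    rw [e.snd_eq _ hp1, e.snd_eq _ hq1, hpq]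
  fixes := by simp only [Function.comp_apply, e.fixes, d.fixes]

def inv (d : ParamLocalHomeo S s₀) : ParamLocalHomeo S s₀ where
  F := d.G
  G := d.F
  U := d.V
  V := d.U
  isOpen_U := d.isOpen_V
  isOpen_V := d.isOpen_U
  mem_U := d.mem_V
  mem_V := d.mem_U
  contF := d.contG
  contG := d.contF
  mapsF := d.mapsG
  mapsG := d.mapsF
  leftInv := d.rightInv
  rightInv := d.leftInv
  snd_eq := d.G_snd_eq
  mono := by
    intro p hp q hq hpq hlt
    have hGp := d.mapsG hp
    have hGq := d.mapsG hq
    have hsnd : (d.G p).2 = (d.G q).2 := by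
      rw [d.G_snd_eq p hp, d.G_snd_eq q hq, hpq]
    rcases lt_trichotomy (d.G p).1 (d.G q).1 with h | h | h
    · exact h
    · exfalso
      have : d.G p = d.G q := Prod.ext h hsnd
      have : p = q := by rw [← d.rightInv p hp, ← d.rightInv q hq, this]
      exact absurd (congrArg Prod.fst this) (ne_of_lt hlt)
    · exfalso
      have := d.mono _ hGq _ hGp hsnd.symm h
      rw [d.rightInv p hp, d.rightInv q hq] at this
      exact absurd hlt (not_lt.mpr this.le)
  fixes := d.G_fixes

lemma comp_sound {d₁ e₁ d₂ e₂ : ParamLocalHomeo S s₀} (h₁ : d₁ ≈ e₁) (h₂ : d₂ ≈ e₂) :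
    comp d₁ d₂ ≈ comp e₁ e₂ := by
  have hc : ContinuousAt d₂.F ((0 : ℝ), s₀) :=
    d₂.contF.continuousAt (d₂.isOpen_U.mem_nhds d₂.mem_U)
  have ht : Tendsto d₂.F (nhds ((0 : ℝ), s₀)) (nhds ((0 : ℝ), s₀)) := by
    have := hc.tendsto
    rwa [d₂.fixes] at this
  exact (h₁.comp_tendsto ht).trans (h₂.fun_comp e₁.F)

lemma inv_sound {d e : ParamLocalHomeo S s₀} (h : d ≈ e) : inv d ≈ inv e := by
  obtain ⟨s, hs, hseq⟩ := Filter.eventuallyEq_iff_exists_mem.mp h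
  obtain ⟨W, hWs, hWopen, hW0⟩ := mem_nhds_iff.mp hs
  set A : Set (ℝ × S) := d.U ∩ e.U ∩ W with hA
  have hAopen : IsOpen A := (d.isOpen_U.inter e.isOpen_U).inter hWopen
  have hA0 : ((0 : ℝ), s₀) ∈ A := ⟨⟨d.mem_U, e.mem_U⟩, hW0⟩
  have hBopen : IsOpen (d.V ∩ d.G ⁻¹' A) := d.contG.isOpen_inter_preimage d.isOpen_V hAopen
  have hB0 : ((0 : ℝ), s₀) ∈ d.V ∩ d.G ⁻¹' A :=
    ⟨d.mem_V, by simp only [Set.mem_preimage, d.G_fixes]; exact hA0⟩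
  apply Filter.eventuallyEq_of_mem (hBopen.mem_nhds hB0)
  rintro q ⟨hq1, hq2⟩
  simp only [Set.mem_preimage] at hq2
  obtain ⟨⟨hxU, hxU'⟩, hxW⟩ := hq2
  show d.G q = e.G q
  have h1 : d.F (d.G q) = q := d.rightInv q hq1
  have h2 : e.F (d.G q) = q := by rw [← hseq (hWs hxW)]; exact h1
  calc d.G q = e.G (e.F (d.G q)) := (e.leftInv _ hxU').symm
    _ = e.G q := by rw [h2]

end ParamLocalHomeo

/-- The group `Homeo̰₊^{(S,s₀)}(ℝ, 0)` of germs at `(0, s₀)` of local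
homeomorphisms of `ℝ × S` of the form `(x, s) ↦ (h_s x, s)`, fixing `(0, s₀)`,
under composition of germs. -/
def ParamGermHomeoPlus : Type _ := Quotient (ParamLocalHomeo.setoid (S := S) (s₀ := s₀))

namespace ParamGermHomeoPlus

instance : Group (ParamGermHomeoPlus S s₀) where
  mul := Quotient.map₂ ParamLocalHomeo.comp
    (fun _ _ h₁ _ _ h₂ => ParamLocalHomeo.comp_sound h₁ h₂)
  one := ⟦ParamLocalHomeo.one⟧
  inv := Quotient.map ParamLocalHomeo.inv (fun _ _ h => ParamLocalHomeo.inv_sound h)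
  mul_assoc a b c := by
    induction a using Quotient.ind
    induction b using Quotient.ind
    induction c using Quotient.ind
    exact Quotient.sound (Filter.EventuallyEq.refl _ _)
  one_mul a := by
    induction a using Quotient.ind
    exact Quotient.sound (Filter.EventuallyEq.refl _ _)
  mul_one a := by
    induction a using Quotient.ind
    exact Quotient.sound (Filter.EventuallyEq.refl _ _)
  inv_mul_cancel a := by
    induction a using Quotient.ind
    rename_i d
    apply Quotient.sound
    apply Filter.eventuallyEq_of_mem (d.isOpen_U.mem_nhds d.mem_U)
    intro p hp
    exact d.leftInv p hp

end ParamGermHomeoPlus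

/-- A group is left-orderable if it admits a linear order invariant under
left multiplication: `g ≺ h` implies `f * g ≺ f * h`. -/
def IsLeftOrderable (G : Type*) [Group G] : Prop :=
  ∃ r : LinearOrder G, ∀ f g h : G, r.lt g h → r.lt (f * g) (f * h)

/-!
For an ultrafilter `𝒰` on `ℝ × S` converging to `(0, s₀)`, a germ `g` determines an element of
the ultrapower `ℝ^𝒰`, the class of `p ↦ (g p).1`. Left multiplication by a germ `f` preserves
strict inequalities between these classes, since `g p` and `h p` lie in the same fibre
`ℝ × {p.2}`, on which `f` is increasing. Two distinct germs differ on a set meeting every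
neighbourhood of `(0, s₀)`, hence belonging to some such ultrafilter, so the classes determine
the germ. The group thus embeds into a product of linear orders on which it acts coordinatewise
by increasing maps, and the lexicographic order for a well-ordering of the index set is
left-invariant.
-/

theorem isLeftOrderable_of_injective_pi {G ι : Type*} [Group G] {X : ι → Type*}
    [∀ i, LinearOrder (X i)] (φ : G → ∀ i, X i) (hφ : Function.Injective φ)
    (hφ_lt : ∀ f g h i, φ g i < φ h i → φ (f * g) i < φ (f * h) i) :
    IsLeftOrderable G := by
  have hφ_eq (f g h : G) (i : ι) (hgh : φ g i = φ h i) : φ (f * g) i = φ (f * h) i := by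
    have cancel (a b : G) (hab : φ (f * a) i < φ (f * b) i) : φ a i < φ b i := by
      simpa using hφ_lt f⁻¹ _ _ i hab
    rcases lt_trichotomy (φ (f * g) i) (φ (f * h) i) with hlt | heq | hgt
    · exact absurd hgh (cancel g h hlt).ne
    · exact heq
    · exact absurd hgh (cancel h g hgt).ne'
  obtain ⟨_, _⟩ := exists_wellFoundedLT ι
  refine ⟨LinearOrder.lift' (fun g => toLex (φ g)) (toLex.injective.comp hφ), ?_⟩
  rintro f g h ⟨i, h_eq, h_lt⟩
  exact ⟨i, fun j hj => hφ_eq f g h j (h_eq j hj), hφ_lt f g h i h_lt⟩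

namespace ParamLocalHomeo

variable {S s₀}

theorem tendsto_F (d : ParamLocalHomeo S s₀) :
    Tendsto d.F (𝓝 ((0 : ℝ), s₀)) (𝓝 ((0 : ℝ), s₀)) := by
  simpa only [d.fixes] using (d.contF.continuousAt (d.isOpen_U.mem_nhds d.mem_U)).tendsto

theorem eventually_snd_F (d : ParamLocalHomeo S s₀) :
    ∀ᶠ p in 𝓝 ((0 : ℝ), s₀), (d.F p).2 = p.2 :=
  eventually_of_mem (d.isOpen_U.mem_nhds d.mem_U) d.snd_eq

theorem eventually_eq_of_fst_eq (d e : ParamLocalHomeo S s₀) :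
    ∀ᶠ p in 𝓝 ((0 : ℝ), s₀), (d.F p).1 = (e.F p).1 → d.F p = e.F p := by
  filter_upwards [d.eventually_snd_F, e.eventually_snd_F] with p hd he hfst
  exact Prod.ext hfst (hd.trans he.symm)

theorem eventually_fst_comp_lt (f g h : ParamLocalHomeo S s₀) :
    ∀ᶠ p in 𝓝 ((0 : ℝ), s₀), (g.F p).1 < (h.F p).1 → (f.F (g.F p)).1 < (f.F (h.F p)).1 := by
  have hf : f.U ∈ 𝓝 ((0 : ℝ), s₀) := f.isOpen_U.mem_nhds f.mem_U
  filter_upwards [g.tendsto_F hf, h.tendsto_F hf, g.eventually_snd_F, h.eventually_snd_F]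
    with p hgU hhU hg hh hlt
  exact f.mono _ hgU _ hhU (hg.trans hh.symm) hlt

end ParamLocalHomeo

namespace ParamGermHomeoPlus

variable {S s₀}

def fstGerm (g : ParamGermHomeoPlus S s₀)
    (𝒰 : {𝒰 : Ultrafilter (ℝ × S) // ↑𝒰 ≤ 𝓝 ((0 : ℝ), s₀)}) : Germ (𝒰.1 : Filter (ℝ × S)) ℝ :=
  Quotient.liftOn g (fun d => ((fun p => (d.F p).1 : ℝ × S → ℝ) : Germ _ ℝ))
    fun _ _ hde => Germ.coe_eq.2 ((hde.filter_mono 𝒰.2).fun_comp Prod.fst)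

theorem fstGerm_injective : Function.Injective (fstGerm (S := S) (s₀ := s₀)) := by
  intro a b hab
  induction a using Quotient.ind with | _ d => ?_
  induction b using Quotient.ind with | _ e => ?_
  refine Quotient.sound (not_not.1 fun hne => ?_)
  have : (𝓝 ((0 : ℝ), s₀) ⊓ 𝓟 {p | d.F p ≠ e.F p}).NeBot :=
    frequently_iff_neBot.1 (not_eventually.1 hne)
  obtain ⟨𝒰, h𝒰⟩ := exists_ultrafilter_le (𝓝 ((0 : ℝ), s₀) ⊓ 𝓟 {p | d.F p ≠ e.F p})
  rw [le_inf_iff, le_principal_iff] at h𝒰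
  have hfst : ∀ᶠ p in (𝒰 : Filter (ℝ × S)), (d.F p).1 = (e.F p).1 :=
    Germ.coe_eq.1 (congrFun hab ⟨𝒰, h𝒰.1⟩)
  obtain ⟨p, hp, hne⟩ :=
    (hfst.mp ((d.eventually_eq_of_fst_eq e).filter_mono h𝒰.1) |>.and h𝒰.2).exists
  exact hne hp

theorem fstGerm_mul_lt (f g h : ParamGermHomeoPlus S s₀)
    (𝒰 : {𝒰 : Ultrafilter (ℝ × S) // ↑𝒰 ≤ 𝓝 ((0 : ℝ), s₀)})
    (hgh : fstGerm g 𝒰 < fstGerm h 𝒰) : fstGerm (f * g) 𝒰 < fstGerm (f * h) 𝒰 := by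
  induction f using Quotient.ind with | _ f => ?_
  induction g using Quotient.ind with | _ g => ?_
  induction h using Quotient.ind with | _ h => ?_
  exact Germ.coe_lt.2 <|
    (Germ.coe_lt.1 hgh).mp ((f.eventually_fst_comp_lt g h).filter_mono 𝒰.2)

end ParamGermHomeoPlus

theorem paramGermHomeoPlus_isLeftOrderable_general {S : Type*} [TopologicalSpace S] (s₀ : S) :
    IsLeftOrderable (ParamGermHomeoPlus S s₀) :=
  isLeftOrderable_of_injective_pi _ ParamGermHomeoPlus.fstGerm_injective
    ParamGermHomeoPlus.fstGerm_mul_lt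

/-- For a pointed metrizable space `(S, s₀)`, the group
`Homeo̰₊^{(S,s₀)}(ℝ, 0)` of germs at `(0, s₀)` of parametrized local
homeomorphisms is left-orderable. -/
theorem paramGermHomeoPlus_isLeftOrderable {S : Type*} [TopologicalSpace S]
    [TopologicalSpace.MetrizableSpace S] (s₀ : S) :
    IsLeftOrderable (ParamGermHomeoPlus S s₀) :=
  paramGermHomeoPlus_isLeftOrderable_general s₀
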